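/- arXiv:0707.0799 — 2 statements merged into one kernel-verified Lean document; each statement's English description precedes it below -/
import Mathlib

section
/- With G, ξ, S, and mod* as above: for every y = (y₁,…,y_M) ∈ S, setting ℓ̃ = y₁ - ⌊y₁/L⌋·L, one has 0 ≤ ℓ̃ < L and ∑_{m=1}^M [(C_m λ_m ℓ̃ - C_m φ_m) mod* (C_m L)]² = ‖yG - ξ‖². -/
/-!
The identity holds coordinate by coordinate, before squaring. Write `k = ⌊y₀/L⌋`, so that
`ℓ̃ = y₀ - kL`. The first coordinate of `yG - ξ` is `C₀ (y₀ - φ₀)`; since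
`y₀ ∈ [φ₀ - L/2, φ₀ + L/2)` this is its own symmetric residue modulo `C₀ L`, and shifting by the
period multiple `C₀ kL` turns it into `C₀ (ℓ̃ - φ₀)`. For `m ≠ 0` the coordinate is
`C_m (λ_m ℓ̃ - φ_m + L ⌈(φ_m - λ_m ℓ̃)/L - 1/2⌉)`, which is `(C_m λ_m ℓ̃ - C_m φ_m) mod* (C_m L)`
written with a ceiling instead of a floor.
-/

open Matrix

/-- The symmetric modulus operation: the unique representative of `x` modulo `T`
lying in `[-T/2, T/2)`. -/
noncomputable def smod (x T : ℝ) : ℝ := x - T * ⌊x / T + 1 / 2⌋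

section Smod

variable {x T : ℝ}

theorem smod_mul_left {c : ℝ} (hc : c ≠ 0) : smod (c * x) (c * T) = c * smod x T := by
  rw [smod, smod, mul_div_mul_left x T hc]
  ring

theorem smod_sub_int_mul (hT : T ≠ 0) (k : ℤ) : smod (x - k * T) T = smod x T := by
  have : (x - k * T) / T + 1 / 2 = x / T + 1 / 2 + ((-k : ℤ) : ℝ) := by
    push_cast
    field_simp
    ring
  rw [smod, smod, this, Int.floor_add_intCast]
  push_cast
  ring

theorem smod_eq_self (hlo : -T / 2 ≤ x) (hhi : x < T / 2) : smod x T = x := by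
  have hT : 0 < T := by linarith
  have : ⌊x / T + 1 / 2⌋ = 0 := by
    have hlo' : -(1 / 2) ≤ x / T := by rw [le_div_iff₀ hT]; linarith
    have hhi' : x / T < 1 / 2 := by rw [div_lt_iff₀ hT]; linarith
    rw [Int.floor_eq_zero_iff]
    constructor <;> linarith
  rw [smod, this, Int.cast_zero, mul_zero, sub_zero]

theorem smod_eq_add_mul_ceil : smod x T = x + T * ⌈-(x / T) - 1 / 2⌉ := by
  rw [smod, ← neg_add', Int.ceil_neg]
  push_cast
  ring

end Smod

theorem vecMul_ite_row_diag {ι R : Type*} [Fintype ι] [DecidableEq ι]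
    [NonUnitalNonAssocSemiring R] (i₀ : ι) (r d y : ι → R) (m : ι) :
    vecMul y (fun p q => if p = i₀ then r q else if p = q then d q else 0) m =
      y i₀ * r m + if m = i₀ then 0 else y m * d m := by
  unfold vecMul dotProduct
  rw [← Finset.add_sum_erase _ _ (Finset.mem_univ i₀)]
  simp only [↓reduceIte]
  congr 1
  split_ifs with hm
  · subst hm
    exact Finset.sum_eq_zero fun p hp => by simp [Finset.ne_of_mem_erase hp]
  · rw [Finset.sum_eq_single_of_mem m (Finset.mem_erase.2 ⟨hm, Finset.mem_univ m⟩)]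
    · simp [hm]
    · intro p hp hpm
      simp [Finset.ne_of_mem_erase hp, hpm]

theorem stmt_15_general (M L : ℕ) (hL : 0 < L) (C lam φ : Fin (M + 1) → ℝ)
    (hC : ∀ m, 0 < C m) (hlam0 : lam 0 = 1)
    (G : Matrix (Fin (M + 1)) (Fin (M + 1)) ℝ)
    (hG : G = fun p q => if p = 0 then C q * lam q else if p = q then C q * (L : ℝ) else 0)
    (ξ : Fin (M + 1) → ℝ) (hξ : ξ = fun m => C m * φ m)
    (S : Set (Fin (M + 1) → ℝ))
    (hS : S = {y | (∃ z : ℤ, y 0 = (z : ℝ)) ∧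
      -(L : ℝ) / 2 + φ 0 ≤ y 0 ∧ y 0 < (L : ℝ) / 2 + φ 0 ∧
      ∀ m : Fin (M + 1), m ≠ 0 →
        y m = (⌈φ m / (L : ℝ) - (y 0 / (L : ℝ) - (⌊y 0 / (L : ℝ)⌋ : ℝ)) * lam m - 1 / 2⌉ : ℝ)
          - (⌊y 0 / (L : ℝ)⌋ : ℝ) * lam m}) :
    ∀ y ∈ S, ∀ ℓt : ℝ, ℓt = y 0 - (⌊y 0 / (L : ℝ)⌋ : ℝ) * (L : ℝ) →
      (0 ≤ ℓt ∧ ℓt < (L : ℝ)) ∧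
      ∑ m, (smod (C m * lam m * ℓt - C m * φ m) (C m * (L : ℝ))) ^ 2 =
        ∑ m, (Matrix.vecMul y G m - ξ m) ^ 2 := by
  subst hG hξ hS
  rintro y ⟨-, hlo, hhi, hy⟩ ℓt hℓt
  have hL' : (0 : ℝ) < L := Nat.cast_pos.2 hL
  refine ⟨hℓt ▸ ⟨Int.sub_floor_div_mul_nonneg _ hL', Int.sub_floor_div_mul_lt _ hL'⟩,
    Finset.sum_congr rfl fun m _ => congrArg (· ^ 2) ?_⟩
  rw [vecMul_ite_row_diag, mul_assoc, ← mul_sub, smod_mul_left (hC m).ne']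
  by_cases hm : m = 0
  · subst hm
    rw [hlam0, one_mul, if_pos rfl, hℓt, sub_right_comm, smod_sub_int_mul hL'.ne',
      smod_eq_self (by linarith) (by linarith)]
    ring
  · rw [if_neg hm, hy m hm, smod_eq_add_mul_ceil]
    have hceil_arg : -((lam m * ℓt - φ m) / L) - 1 / 2
        = φ m / L - (y 0 / L - ⌊y 0 / L⌋) * lam m - 1 / 2 := by
      rw [hℓt]
      field_simp
      ring
    rw [hceil_arg, hℓt]
    ring

theorem stmt_15 (M L : ℕ) (hL : 0 < L) (C lam φ : Fin (M + 1) → ℝ)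
    (hC : ∀ m, 0 < C m) (hlam0 : lam 0 = 1)
    (hlam : ∀ m, 0 ≤ lam m ∧ lam m < (L : ℝ))
    (G : Matrix (Fin (M + 1)) (Fin (M + 1)) ℝ)
    (hG : G = fun p q => if p = 0 then C q * lam q else if p = q then C q * (L : ℝ) else 0)
    (ξ : Fin (M + 1) → ℝ) (hξ : ξ = fun m => C m * φ m)
    (S : Set (Fin (M + 1) → ℝ))
    (hS : S = {y | (∃ z : ℤ, y 0 = (z : ℝ)) ∧
      -(L : ℝ) / 2 + φ 0 ≤ y 0 ∧ y 0 < (L : ℝ) / 2 + φ 0 ∧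
      ∀ m : Fin (M + 1), m ≠ 0 →
        y m = (⌈φ m / (L : ℝ) - (y 0 / (L : ℝ) - (⌊y 0 / (L : ℝ)⌋ : ℝ)) * lam m - 1 / 2⌉ : ℝ)
          - (⌊y 0 / (L : ℝ)⌋ : ℝ) * lam m}) :
    ∀ y ∈ S, ∀ ℓt : ℝ, ℓt = y 0 - (⌊y 0 / (L : ℝ)⌋ : ℝ) * (L : ℝ) →
      (0 ≤ ℓt ∧ ℓt < (L : ℝ)) ∧
      ∑ m, (smod (C m * lam m * ℓt - C m * φ m) (C m * (L : ℝ))) ^ 2 =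
        ∑ m, (Matrix.vecMul y G m - ξ m) ^ 2 :=
  stmt_15_general M L hL C lam φ hC hlam0 G hG ξ hξ S hS
end

section
/- With the setup of the two preceding lemmas, min over ℓ ∈ {0,…,L-1} of ∑_{m=1}^M [(C_m λ_m ℓ - C_m φ_m) mod* (C_m L)]² equals min over y ∈ S of ‖yG - ξ‖². Moreover, if the minimizing ℓ̂ is unique, then ℓ̂ = ŷ₁ - ⌊ŷ₁/L⌋·L, where ŷ₁ is the first coordinate of any minimizer ŷ ∈ S of ‖yG - ξ‖². -/
open Matrix

lemma smod_add_int_mul (x T : ℝ) (hT : T ≠ 0) (j : ℤ) :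
    smod (x + T * j) T = smod x T := by
  unfold smod
  rw [add_div, mul_div_cancel_left₀ _ hT,
    show x / T + (j:ℝ) + 1 / 2 = x / T + 1 / 2 + (j:ℝ) by ring, Int.floor_add_intCast]
  push_cast; ring

lemma smod_of_mem (x T : ℝ) (hT : 0 < T) (h1 : -(T/2) ≤ x) (h2 : x < T/2) :
    smod x T = x := by
  unfold smod
  have hd1 : -(1/2 : ℝ) ≤ x / T := by
    rw [neg_le, ← neg_div, div_le_div_iff₀ hT (by linarith : (0:ℝ) < 2)]
    nlinarith
  have hd2 : x / T < 1/2 := by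
    rw [div_lt_div_iff₀ hT (by linarith : (0:ℝ) < 2)]
    nlinarith
  have h : ⌊x / T + 1 / 2⌋ = 0 := by
    rw [Int.floor_eq_zero_iff]
    constructor <;> simp <;> linarith
  rw [h]
  simp

lemma smod_const_mul (c x T : ℝ) (hc : 0 < c) :
    smod (c * x) (c * T) = c * smod x T := by
  unfold smod
  rw [mul_div_mul_left x T (ne_of_gt hc)]
  ring

lemma smod_bounds (x T : ℝ) (hT : 0 < T) : -(T/2) ≤ smod x T ∧ smod x T < T/2 := by
  unfold smod
  have h1 := Int.floor_le (x / T + 1 / 2)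
  have h2 := Int.lt_floor_add_one (x / T + 1 / 2)
  constructor
  · have := mul_le_mul_of_nonneg_left h1 hT.le
    have hx : T * (x/T) = x := by field_simp
    nlinarith
  · have := mul_lt_mul_of_pos_left h2 hT
    have hx : T * (x/T) = x := by field_simp
    nlinarith

lemma floor_int_div_nat (k : ℤ) (L : ℕ) : ⌊(k:ℝ)/(L:ℝ)⌋ = k / (L:ℤ) := by
  have h : ((k:ℝ)/(L:ℝ)) = (((k / (L:ℕ) : ℚ)) : ℝ) := by push_cast; ring
  rw [h, Rat.floor_cast, Rat.floor_intCast_div_natCast]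

lemma bridge (M L : ℕ) (hL : 0 < L) (C lam φ : Fin (M + 1) → ℝ)
    (hC : ∀ m, 0 < C m) (hlam0 : lam 0 = 1)
    (G : Matrix (Fin (M + 1)) (Fin (M + 1)) ℝ)
    (hG : G = fun p q => if p = 0 then C q * lam q else if p = q then C q * (L : ℝ) else 0)
    (y : Fin (M + 1) → ℝ) (k : ℤ) (hy0 : y 0 = (k : ℝ))
    (hk1 : -(L : ℝ) / 2 + φ 0 ≤ (k:ℝ)) (hk2 : (k:ℝ) < (L : ℝ) / 2 + φ 0)
    (hym : ∀ m : Fin (M + 1), m ≠ 0 →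
        y m = (⌈φ m / (L : ℝ) - ((k:ℝ) / (L : ℝ) - (⌊(k:ℝ) / (L : ℝ)⌋ : ℝ)) * lam m - 1 / 2⌉ : ℝ)
          - (⌊(k:ℝ) / (L : ℝ)⌋ : ℝ) * lam m) :
    ∀ m : Fin (M + 1),
      Matrix.vecMul y G m - C m * φ m
        = smod (C m * lam m * (((k % (L:ℤ)).toNat : ℕ) : ℝ) - C m * φ m) (C m * (L : ℝ)) := by
  have hL' : (0:ℝ) < (L:ℝ) := by exact_mod_cast hL
  have hL0 : (L:ℤ) ≠ 0 := by exact_mod_cast hL.ne'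
  set n : ℤ := k / (L:ℤ) with hn
  set ℓ : ℤ := k % (L:ℤ) with hℓ
  have hℓ0 : 0 ≤ ℓ := Int.emod_nonneg k hL0
  have hkd : (L:ℤ) * n + ℓ = k := Int.mul_ediv_add_emod k (L:ℤ)
  have hkR : (k:ℝ) = (L:ℝ) * (n:ℝ) + (ℓ:ℝ) := by exact_mod_cast hkd.symm
  have hfl : ⌊(k:ℝ)/(L:ℝ)⌋ = n := floor_int_div_nat k L
  have hℓR : (((ℓ.toNat : ℕ)) : ℝ) = (ℓ:ℝ) := by
    rw [← Int.cast_natCast, Int.toNat_of_nonneg hℓ0]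
  have hvm : ∀ m, Matrix.vecMul y G m
      = y 0 * (C m * lam m) + (if m = 0 then 0 else y m * (C m * (L:ℝ))) := by
    intro m
    have hterm : ∀ p : Fin (M+1),
        y p * G p m
        = (if p = 0 then y 0 * (C m * lam m) else 0)
          + (if p = m then (if m = 0 then 0 else y m * (C m * (L:ℝ))) else 0) := by
      intro p
      subst hG
      by_cases h1 : p = 0 <;> by_cases h2 : p = m <;> simp_all
    simp only [Matrix.vecMul, dotProduct]
    rw [Finset.sum_congr rfl (fun p _ => hterm p), Finset.sum_add_distrib]
    simp [Finset.sum_ite_eq']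
  intro m
  rw [hvm m, hℓR]
  have hsm : smod (C m * lam m * (ℓ:ℝ) - C m * φ m) (C m * (L:ℝ))
      = C m * smod (lam m * (ℓ:ℝ) - φ m) (L:ℝ) := by
    rw [show C m * lam m * (ℓ:ℝ) - C m * φ m = C m * (lam m * (ℓ:ℝ) - φ m) by ring,
      smod_const_mul _ _ _ (hC m)]
  rw [hsm]
  by_cases hm : m = 0
  · subst hm
    rw [if_pos rfl]
    have hs : smod (lam 0 * (ℓ:ℝ) - φ 0) (L:ℝ) = (k:ℝ) - φ 0 := by
      rw [hlam0, one_mul,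
        show (ℓ:ℝ) - φ 0 = ((k:ℝ) - φ 0) + (L:ℝ) * ((-n : ℤ):ℝ) by push_cast; linarith [hkR],
        smod_add_int_mul _ _ (ne_of_gt hL') (-n)]
      exact smod_of_mem _ _ hL' (by rw [neg_div] at hk1; linarith) (by linarith)
    rw [hs, hy0, hlam0]; ring
  · rw [if_neg hm, hym m hm, hfl, hy0]
    have harg : φ m / (L:ℝ) - ((k:ℝ)/(L:ℝ) - ((n:ℤ):ℝ)) * lam m - 1/2
        = -((lam m * (ℓ:ℝ) - φ m)/(L:ℝ) + 1/2) := by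
      rw [hkR]; field_simp; ring
    rw [harg, Int.ceil_neg]
    unfold smod
    rw [hkR]
    push_cast
    ring

theorem stmt_16 (M L : ℕ) (hL : 0 < L) (C lam φ : Fin (M + 1) → ℝ)
    (hC : ∀ m, 0 < C m) (hlam0 : lam 0 = 1)
    (hlam : ∀ m, 0 ≤ lam m ∧ lam m < (L : ℝ))
    (G : Matrix (Fin (M + 1)) (Fin (M + 1)) ℝ)
    (hG : G = fun p q => if p = 0 then C q * lam q else if p = q then C q * (L : ℝ) else 0)
    (ξ : Fin (M + 1) → ℝ) (hξ : ξ = fun m => C m * φ m)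
    (S : Set (Fin (M + 1) → ℝ))
    (hS : S = {y | (∃ z : ℤ, y 0 = (z : ℝ)) ∧
      -(L : ℝ) / 2 + φ 0 ≤ y 0 ∧ y 0 < (L : ℝ) / 2 + φ 0 ∧
      ∀ m : Fin (M + 1), m ≠ 0 →
        y m = (⌈φ m / (L : ℝ) - (y 0 / (L : ℝ) - (⌊y 0 / (L : ℝ)⌋ : ℝ)) * lam m - 1 / 2⌉ : ℝ)
          - (⌊y 0 / (L : ℝ)⌋ : ℝ) * lam m})
    (f : ℕ → ℝ)
    (hf : f = fun (ℓ : ℕ) => ∑ m, (smod (C m * lam m * (ℓ : ℝ) - C m * φ m) (C m * (L : ℝ))) ^ 2)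
    (g : (Fin (M + 1) → ℝ) → ℝ)
    (hg : g = fun y => ∑ m, (Matrix.vecMul y G m - ξ m) ^ 2) :
    sInf {v : ℝ | ∃ ℓ : ℕ, ℓ < L ∧ v = f ℓ} = sInf {v : ℝ | ∃ y ∈ S, v = g y} ∧
    ∀ ℓhat : ℕ, ℓhat < L → (∀ ℓ : ℕ, ℓ < L → f ℓhat ≤ f ℓ) →
      (∀ ℓ : ℕ, ℓ < L → f ℓ = f ℓhat → ℓ = ℓhat) →
      ∀ yhat ∈ S, (∀ y ∈ S, g yhat ≤ g y) →
        (ℓhat : ℝ) = yhat 0 - (⌊yhat 0 / (L : ℝ)⌋ : ℝ) * (L : ℝ) := by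
  have hL' : (0:ℝ) < (L:ℝ) := by exact_mod_cast hL
  have hLZ : (0:ℤ) < (L:ℤ) := by exact_mod_cast hL
  -- forward direction: every y in S corresponds to some ℓ < L
  have main : ∀ y ∈ S, ∃ ℓ : ℕ, ℓ < L ∧ g y = f ℓ ∧
      (ℓ:ℝ) = y 0 - (⌊y 0/(L:ℝ)⌋:ℝ) * (L:ℝ) := by
    intro y hy
    rw [hS] at hy
    obtain ⟨⟨k, hy0⟩, h1, h2, h3⟩ := hy
    rw [hy0] at h1 h2 h3
    have key := bridge M L hL C lam φ hC hlam0 G hG y k hy0 h1 h2 h3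
    refine ⟨(k % (L:ℤ)).toNat, ?_, ?_, ?_⟩
    · have h := Int.emod_lt_of_pos k hLZ
      have h0 := Int.emod_nonneg k hLZ.ne'
      omega
    · simp only [hg, hf, hξ]
      refine Finset.sum_congr rfl fun m _ => ?_
      rw [key m]
    · rw [hy0, floor_int_div_nat k L]
      have h0 := Int.emod_nonneg k hLZ.ne'
      have hc : ((k % (L:ℤ)).toNat : ℝ) = ((k % (L:ℤ) : ℤ) : ℝ) := by
        rw [← Int.cast_natCast, Int.toNat_of_nonneg h0]
      rw [hc, Int.emod_def]
      push_cast; ring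
  -- reverse direction: every ℓ < L is realized by some y in S
  have main2 : ∀ ℓ : ℕ, ℓ < L → ∃ y ∈ S, g y = f ℓ := by
    intro ℓ hℓ
    set j : ℤ := ⌊((ℓ:ℝ) - φ 0)/(L:ℝ) + 1/2⌋ with hj
    set k : ℤ := (ℓ:ℤ) - (L:ℤ) * j with hk
    have hks : (k:ℝ) - φ 0 = smod ((ℓ:ℝ) - φ 0) (L:ℝ) := by
      unfold smod
      rw [hk]; push_cast; rw [← hj]; ring
    obtain ⟨hb1, hb2⟩ := smod_bounds ((ℓ:ℝ) - φ 0) (L:ℝ) hL'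
    have hk1 : -(L : ℝ) / 2 + φ 0 ≤ (k:ℝ) := by rw [neg_div]; linarith
    have hk2 : (k:ℝ) < (L : ℝ) / 2 + φ 0 := by linarith
    set y : Fin (M+1) → ℝ := fun m => if m = 0 then (k:ℝ) else
      ((⌈φ m/(L:ℝ) - ((k:ℝ)/(L:ℝ) - (⌊(k:ℝ)/(L:ℝ)⌋:ℝ))*lam m - 1/2⌉:ℝ)
        - (⌊(k:ℝ)/(L:ℝ)⌋:ℝ)*lam m) with hy
    have hy0 : y 0 = (k:ℝ) := by simp [hy]
    have hym : ∀ m : Fin (M + 1), m ≠ 0 →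
        y m = (⌈φ m / (L : ℝ) - ((k:ℝ) / (L : ℝ) - (⌊(k:ℝ) / (L : ℝ)⌋ : ℝ)) * lam m - 1 / 2⌉ : ℝ)
          - (⌊(k:ℝ) / (L : ℝ)⌋ : ℝ) * lam m := by
      intro m hm; simp [hy, hm]
    have hyS : y ∈ S := by
      rw [hS]
      refine ⟨⟨k, hy0⟩, ?_, ?_, ?_⟩
      · rw [hy0]; exact hk1
      · rw [hy0]; exact hk2
      · intro m hm; rw [hy0]; exact hym m hm
    have key := bridge M L hL C lam φ hC hlam0 G hG y k hy0 hk1 hk2 hym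
    have hmod : ((k % (L:ℤ)).toNat : ℕ) = ℓ := by
      have h1 : k % (L:ℤ) = (ℓ:ℤ) := by
        rw [show k = (ℓ:ℤ) + (L:ℤ) * (-j) by rw [hk]; ring, Int.add_mul_emod_self_left]
        exact Int.emod_eq_of_lt (by positivity) (by exact_mod_cast hℓ)
      rw [h1]; simp
    refine ⟨y, hyS, ?_⟩
    simp only [hg, hf, hξ]
    refine Finset.sum_congr rfl fun m _ => ?_
    rw [key m, hmod]
  constructor
  · have hsets : {v : ℝ | ∃ ℓ : ℕ, ℓ < L ∧ v = f ℓ} = {v : ℝ | ∃ y ∈ S, v = g y} := by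
      ext v
      simp only [Set.mem_setOf_eq]
      constructor
      · rintro ⟨ℓ, hℓ, rfl⟩
        obtain ⟨y, hyS, hgy⟩ := main2 ℓ hℓ
        exact ⟨y, hyS, hgy.symm⟩
      · rintro ⟨y, hyS, rfl⟩
        obtain ⟨ℓ, hℓ, hgf, _⟩ := main y hyS
        exact ⟨ℓ, hℓ, hgf⟩
    rw [hsets]
  · intro ℓhat hℓhat hmin huniq yhat hyhatS hgmin
    obtain ⟨ℓ', hℓ'L, hgf, hcoord⟩ := main yhat hyhatS
    have hle : ∀ ℓ : ℕ, ℓ < L → f ℓ' ≤ f ℓ := by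
      intro ℓ hℓ
      obtain ⟨y, hyS, hgy⟩ := main2 ℓ hℓ
      calc f ℓ' = g yhat := hgf.symm
        _ ≤ g y := hgmin y hyS
        _ = f ℓ := hgy
    have heq : f ℓ' = f ℓhat := le_antisymm (hle ℓhat hℓhat) (hmin ℓ' hℓ'L)
    have hℓℓ : ℓ' = ℓhat := huniq ℓ' hℓ'L heq
    rw [← hℓℓ]
    exact hcoord
end
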